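/- Let 0 < α ≤ 1, let s be a positive integer with √s > α, and let k ≥ 4α²/(√s − α)² be such that ks is a positive integer. Then a(s,ks;α) = (√(ks) − α)/(√s + α) ≥ √k/2 > 1, and if the (ℓ₂,ℓ₁)-RIP constants of A ∈ ℝ^{m×n} satisfy δ_{ks}^{ub} + (√k/2)·δ_{(k+1)s}^{lb} < √k/2 − 1, then δ_{ks}^{ub} + a(s,ks;α)·δ_{(k+1)s}^{lb} < a(s,ks;α) − 1; consequently any s-sparse x with b = Ax is the unique minimizer of ‖·‖₁ − α‖·‖₂ subject to Az = b. -/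

import Mathlib

/-!
Uniqueness is a null space property: if `x̂` does at least as well as `x`, then `h = x̂ - x`
lies in the kernel of `A` and satisfies the cone condition `‖h_{Sᶜ}‖₁ ≤ ‖h_S‖₁ + α ‖h‖₂`,
`S` the support of `x`. Splitting `Sᶜ` into blocks of the `ks` largest remaining entries of `h`,
the upper RIP bound controls the image of all blocks but the first by the ℓ₁ mass of `h_{Sᶜ}`,
the lower RIP bound controls the `(ks + s)`-sparse remainder, and `δub + a δlb < a - 1` makes
the two incompatible unless `h = 0`. That condition follows from the one with `√k / 2 ≤ a`,
since it only weakens as `a` grows.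
-/

open Finset

/-- The ℓ₁ norm of a vector in `ℝⁿ`. -/
noncomputable def l1norm {n : ℕ} (x : Fin n → ℝ) : ℝ := ∑ i, |x i|

/-- The ℓ₂ norm of a vector in `ℝⁿ`. -/
noncomputable def l2norm {n : ℕ} (x : Fin n → ℝ) : ℝ := Real.sqrt (∑ i, (x i) ^ 2)

/-- The restriction `x_S` of a vector `x` to an index set `S` (equal to `x` on `S`, zero
outside `S`). -/
def restr {n : ℕ} (x : Fin n → ℝ) (S : Finset (Fin n)) : Fin n → ℝ :=
  fun i => if i ∈ S then x i else 0

/-- `T` is an index set of the `s` largest-magnitude entries of `x` among the indices in `S`. -/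
def IsMaxIdxOn {n : ℕ} (x : Fin n → ℝ) (s : ℕ) (T S : Finset (Fin n)) : Prop :=
  T ⊆ S ∧ T.card = s ∧ ∀ i ∈ T, ∀ j ∈ S \ T, |x j| ≤ |x i|

/-- `T` is an index set of the `s` largest-magnitude entries of `x`. -/
def IsMaxIdx {n : ℕ} (x : Fin n → ℝ) (s : ℕ) (T : Finset (Fin n)) : Prop :=
  IsMaxIdxOn x s T Finset.univ

/-- A vector is `r`-sparse: it has at most `r` nonzero entries. -/
def Sparse {n : ℕ} (r : ℕ) (v : Fin n → ℝ) : Prop :=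
  ∃ S : Finset (Fin n), S.card ≤ r ∧ ∀ i ∉ S, v i = 0

section

variable {n : ℕ}

lemma l2norm_nonneg (x : Fin n → ℝ) : 0 ≤ l2norm x := Real.sqrt_nonneg _

lemma l2norm_eq_norm_toLp (x : Fin n → ℝ) : l2norm x = ‖WithLp.toLp 2 x‖ := by
  simp [l2norm, EuclideanSpace.norm_eq, sq_abs]

lemma l2norm_add_le (x y : Fin n → ℝ) : l2norm (x + y) ≤ l2norm x + l2norm y := by
  simpa only [l2norm_eq_norm_toLp, WithLp.toLp_add] using norm_add_le _ _

lemma l2norm_eq_zero {x : Fin n → ℝ} : l2norm x = 0 ↔ x = 0 := by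
  rw [l2norm_eq_norm_toLp, norm_eq_zero, WithLp.toLp_eq_zero]

lemma l1norm_add_le (x y : Fin n → ℝ) : l1norm (x + y) ≤ l1norm x + l1norm y := by
  simp only [l1norm, Pi.add_apply, ← sum_add_distrib]
  exact sum_le_sum fun i _ => abs_add_le _ _

lemma l1norm_neg (x : Fin n → ℝ) : l1norm (-x) = l1norm x := by
  simp [l1norm]

lemma l1norm_zero : l1norm (0 : Fin n → ℝ) = 0 := by
  simp [l1norm]

lemma sum_restr (f : ℝ → ℝ) (hf : f 0 = 0) (x : Fin n → ℝ) (S : Finset (Fin n)) :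
    ∑ i, f (restr x S i) = ∑ i ∈ S, f (x i) := by
  rw [← sum_subset (subset_univ S) fun i _ hi => by rw [restr, if_neg hi, hf]]
  exact sum_congr rfl fun i hi => by rw [restr, if_pos hi]

lemma l2norm_restr (x : Fin n → ℝ) (S : Finset (Fin n)) :
    l2norm (restr x S) = Real.sqrt (∑ i ∈ S, x i ^ 2) := by
  rw [l2norm, sum_restr (· ^ 2) (zero_pow two_ne_zero)]

lemma restr_univ (x : Fin n → ℝ) : restr x univ = x := by
  funext i; simp [restr]

lemma restr_union {S T : Finset (Fin n)} (hST : Disjoint S T) (x : Fin n → ℝ) :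
    restr x (S ∪ T) = restr x S + restr x T := by
  funext i
  by_cases hS : i ∈ S
  · simp [restr, hS, disjoint_left.mp hST hS]
  · simp [restr, hS]

lemma sparse_restr {r : ℕ} {S : Finset (Fin n)} (hS : S.card ≤ r) (x : Fin n → ℝ) :
    Sparse r (restr x S) :=
  ⟨S, hS, fun _ hi => if_neg hi⟩

lemma l2norm_restr_mono (x : Fin n → ℝ) {S T : Finset (Fin n)} (hST : S ⊆ T) :
    l2norm (restr x S) ≤ l2norm (restr x T) := by
  rw [l2norm_restr, l2norm_restr]
  exact Real.sqrt_le_sqrt (sum_le_sum_of_subset_of_nonneg hST fun i _ _ => sq_nonneg _)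

lemma sum_abs_le_sqrt_card_mul_l2norm_restr (x : Fin n → ℝ) (S : Finset (Fin n)) :
    ∑ i ∈ S, |x i| ≤ Real.sqrt S.card * l2norm (restr x S) := by
  rw [l2norm_restr, ← Real.sqrt_mul (Nat.cast_nonneg _)]
  refine Real.le_sqrt_of_sq_le ?_
  simpa only [sq_abs] using sq_sum_le_card_mul_sum_sq (s := S) (f := fun i => |x i|)

lemma l2norm_restr_le_sqrt_card_mul {x : Fin n → ℝ} {S : Finset (Fin n)} {μ : ℝ} (hμ : 0 ≤ μ)
    (hx : ∀ i ∈ S, |x i| ≤ μ) : l2norm (restr x S) ≤ Real.sqrt S.card * μ := by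
  rw [l2norm_restr, ← Real.sqrt_sq hμ, ← Real.sqrt_mul (Nat.cast_nonneg _)]
  refine Real.sqrt_le_sqrt ?_
  simpa using sum_le_card_nsmul S (fun i => x i ^ 2) (μ ^ 2) fun i hi => by
    simpa only [sq_abs] using pow_le_pow_left₀ (abs_nonneg _) (hx i hi) 2

/-- AM-GM applied to `∑ x² ≤ μ ∑ |x| = (c μ) (∑ |x| / c)`. -/
lemma l2norm_restr_le_of_abs_le {x : Fin n → ℝ} {S : Finset (Fin n)} {μ c : ℝ} (hμ : 0 ≤ μ)
    (hc : 0 < c) (hx : ∀ i ∈ S, |x i| ≤ μ) :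
    l2norm (restr x S) ≤ c * μ + (∑ i ∈ S, |x i|) / c := by
  have hsq : ∑ i ∈ S, x i ^ 2 ≤ μ * ∑ i ∈ S, |x i| := by
    rw [mul_sum]
    refine sum_le_sum fun i hi => ?_
    rw [← sq_abs, sq]
    exact mul_le_mul_of_nonneg_right (hx i hi) (abs_nonneg _)
  have hY : 0 ≤ ∑ i ∈ S, |x i| := sum_nonneg fun i _ => abs_nonneg _
  rw [l2norm_restr, Real.sqrt_le_iff]
  refine ⟨by positivity, hsq.trans ?_⟩
  have : μ * ∑ i ∈ S, |x i| = (c * μ) * ((∑ i ∈ S, |x i|) / c) := by field_simp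
  rw [this]
  nlinarith [mul_nonneg hc.le hμ, div_nonneg hY hc.le]

lemma exists_isMaxIdxOn (x : Fin n → ℝ) (R : Finset (Fin n)) {t : ℕ} (ht : t ≤ R.card) :
    ∃ T, IsMaxIdxOn x t T R := by
  induction t with
  | zero => exact ⟨∅, by simp [IsMaxIdxOn]⟩
  | succ t ih =>
    obtain ⟨T, hTR, hTcard, hTmax⟩ := ih (Nat.le_of_succ_le ht)
    have hne : (R \ T).Nonempty := by
      rw [← card_pos, card_sdiff_of_subset hTR]; omega
    obtain ⟨j, hj, hjmax⟩ := exists_max_image (R \ T) (fun i => |x i|) hne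
    obtain ⟨hjR, hjT⟩ := mem_sdiff.mp hj
    refine ⟨insert j T, insert_subset hjR hTR, by rw [card_insert_of_notMem hjT, hTcard], ?_⟩
    intro i hi l hl
    have hlT : l ∈ R \ T := by
      simp only [mem_sdiff, mem_insert, not_or] at hl ⊢
      exact ⟨hl.1, hl.2.2⟩
    rcases mem_insert.mp hi with rfl | hiT
    · exact hjmax l hlT
    · exact hTmax i hiT l hlT

/-- The witness is the smallest of the `r` largest entries, so that `r μ ≤ ∑ j ∈ T, |x j|`. -/
lemma IsMaxIdxOn.exists_tail_bound {x : Fin n → ℝ} {r : ℕ} {T R : Finset (Fin n)}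
    (hT : IsMaxIdxOn x r T R) (hr : 0 < r) :
    ∃ μ, 0 ≤ μ ∧ (∀ j ∈ R \ T, |x j| ≤ μ) ∧
      Real.sqrt r * μ + (∑ j ∈ R \ T, |x j|) / Real.sqrt r ≤ (∑ j ∈ R, |x j|) / Real.sqrt r := by
  obtain ⟨hTR, hTcard, hTmax⟩ := hT
  obtain ⟨i, hi, himin⟩ := exists_min_image T (fun i => |x i|) (card_pos.mp (hTcard ▸ hr))
  refine ⟨|x i|, abs_nonneg _, hTmax i hi, ?_⟩
  have hmass : r * |x i| ≤ ∑ j ∈ T, |x j| := by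
    simpa [hTcard] using card_nsmul_le_sum T (fun j => |x j|) _ himin
  have hsqrt : Real.sqrt r * Real.sqrt r = r := Real.mul_self_sqrt (Nat.cast_nonneg r)
  have hpos : 0 < Real.sqrt r := Real.sqrt_pos.mpr (Nat.cast_pos.mpr hr)
  rw [← sum_sdiff hTR, add_div, add_comm, add_le_add_iff_left, le_div_iff₀ hpos,
    mul_right_comm, hsqrt]
  exact hmass

lemma eq_zero_of_mul_le_of_mul_le {p q a b X Z : ℝ} (hX : 0 ≤ X) (hZ : 0 ≤ Z) (ha : 0 < a)
    (hq : 0 ≤ q) (h₁ : p * X ≤ q * Z) (h₂ : a * Z ≤ b * X) (hlt : q * b < a * p) :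
    X = 0 ∧ Z = 0 := by
  have hgain : (a * p - q * b) * X ≤ 0 := by
    linarith [mul_le_mul_of_nonneg_left h₁ ha.le, mul_le_mul_of_nonneg_left h₂ hq]
  have hX0 : X = 0 := le_antisymm (nonpos_of_mul_nonpos_right hgain (sub_pos.mpr hlt)) hX
  refine ⟨hX0, le_antisymm ?_ hZ⟩
  rw [hX0, mul_zero] at h₂
  exact nonpos_of_mul_nonpos_right h₂ ha

section RIP

open scoped Matrix

variable {m : ℕ} (A : Matrix (Fin m) (Fin n) ℝ) {r s : ℕ} {α δ δlb δub : ℝ}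

/-- Splitting `R` into consecutive blocks of the `r` largest remaining entries, each block
is `r`-sparse and its ℓ₂ norm is controlled by the ℓ₁ mass of the previous one. -/
theorem l1norm_mulVec_restr_le (hr : 0 < r) (hδ : 0 ≤ 1 + δ)
    (hA : ∀ v : Fin n → ℝ, Sparse r v → l1norm (A *ᵥ v) ≤ (1 + δ) * l2norm v)
    (x : Fin n → ℝ) (R : Finset (Fin n)) {μ : ℝ} (hμ : 0 ≤ μ) (hx : ∀ i ∈ R, |x i| ≤ μ) :
    l1norm (A *ᵥ restr x R) ≤
      (1 + δ) * (Real.sqrt r * μ + (∑ i ∈ R, |x i|) / Real.sqrt r) := by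
  have hpos : 0 < Real.sqrt r := Real.sqrt_pos.mpr (Nat.cast_pos.mpr hr)
  induction R using Finset.strongInduction generalizing μ with | _ R ih => ?_
  by_cases hcard : R.card ≤ r
  · exact (hA _ (sparse_restr hcard x)).trans <|
      mul_le_mul_of_nonneg_left (l2norm_restr_le_of_abs_le hμ hpos hx) hδ
  obtain ⟨T, hT⟩ := exists_isMaxIdxOn x R (not_le.mp hcard).le
  obtain ⟨μ', hμ', hx', htail⟩ := hT.exists_tail_bound hr
  obtain ⟨hTR, hTcard, -⟩ := hT
  have hhead : l1norm (A *ᵥ restr x T) ≤ (1 + δ) * (Real.sqrt r * μ) := by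
    refine (hA _ (sparse_restr hTcard.le x)).trans (mul_le_mul_of_nonneg_left ?_ hδ)
    simpa [hTcard] using l2norm_restr_le_sqrt_card_mul hμ fun i hi => hx i (hTR hi)
  have hrest := ih (R \ T) (sdiff_ssubset hTR (card_pos.mp (by omega))) hμ' hx'
  calc l1norm (A *ᵥ restr x R)
      ≤ l1norm (A *ᵥ restr x T) + l1norm (A *ᵥ restr x (R \ T)) := by
        rw [← union_sdiff_of_subset hTR, restr_union disjoint_sdiff, Matrix.mulVec_add,
          union_sdiff_of_subset hTR]
        exact l1norm_add_le _ _
    _ ≤ (1 + δ) * (Real.sqrt r * μ) +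
        (1 + δ) * (Real.sqrt r * μ' + (∑ j ∈ R \ T, |x j|) / Real.sqrt r) :=
        add_le_add hhead hrest
    _ ≤ (1 + δ) * (Real.sqrt r * μ + (∑ i ∈ R, |x i|) / Real.sqrt r) := by
        rw [← mul_add]
        exact mul_le_mul_of_nonneg_left (add_le_add_right htail _) hδ

/-- With `T` the `r` largest entries of `h` off `S`, `X = ‖h_{S ∪ T}‖₂` and
`Z = ‖h_{Sᶜ}‖₁ / √r`: since `A h_{S ∪ T} = -A h_{Sᶜ \ T}`, the two RIP bounds give
`(1 - δlb) X ≤ (1 + δub) Z`, while the cone condition and Cauchy–Schwarz on `S` give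
`(√r - α) Z ≤ (√s + α) X`. -/
theorem eq_zero_of_mulVec_eq_zero_of_cone (hα : 0 ≤ α) (hαr : α < Real.sqrt r) (hδub : 0 ≤ 1 + δub)
    (hlb : ∀ v : Fin n → ℝ, Sparse (r + s) v → (1 - δlb) * l2norm v ≤ l1norm (A *ᵥ v))
    (hub : ∀ v : Fin n → ℝ, Sparse r v → l1norm (A *ᵥ v) ≤ (1 + δub) * l2norm v)
    (hcond : (1 + δub) * (Real.sqrt s + α) < (Real.sqrt r - α) * (1 - δlb))
    {h : Fin n → ℝ} (hAh : A *ᵥ h = 0) {S : Finset (Fin n)} (hS : S.card ≤ s)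
    (hcone : ∑ i ∈ Sᶜ, |h i| ≤ ∑ i ∈ S, |h i| + α * l2norm h) : h = 0 := by
  have hc : 0 < Real.sqrt r := hα.trans_lt hαr
  have hr : 0 < r := Nat.cast_pos.mp (Real.sqrt_pos.mp hc)
  have hδlb : 0 < 1 - δlb :=
    pos_of_mul_pos_right ((by positivity : 0 ≤ (1 + δub) * (Real.sqrt s + α)).trans_lt hcond)
      (sub_nonneg.mpr hαr.le)
  by_cases hcard : Sᶜ.card ≤ r
  · have hsparse : Sparse (r + s) h :=
      ⟨univ, by rw [card_univ, ← card_add_card_compl S]; omega, by simp⟩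
    have hle := hlb h hsparse
    rw [hAh, l1norm_zero] at hle
    exact l2norm_eq_zero.mp (le_antisymm (nonpos_of_mul_nonpos_right hle hδlb) (l2norm_nonneg h))
  obtain ⟨T, hT⟩ := exists_isMaxIdxOn h Sᶜ (not_le.mp hcard).le
  obtain ⟨μ, hμ, htail_le, htail⟩ := hT.exists_tail_bound hr
  obtain ⟨hTS, hTcard, -⟩ := hT
  set u := restr h (S ∪ T)
  set v := restr h (Sᶜ \ T)
  set X := l2norm u
  set Z := (∑ i ∈ Sᶜ, |h i|) / Real.sqrt r
  have huv : u + v = h := by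
    have hdisj : Disjoint (S ∪ T) (Sᶜ \ T) :=
      disjoint_union_left.mpr ⟨disjoint_compl_right.mono_right sdiff_subset, disjoint_sdiff⟩
    rw [← restr_union hdisj, union_assoc, union_sdiff_of_subset hTS, union_compl, restr_univ]
  have hv : l2norm v ≤ Z := (l2norm_restr_le_of_abs_le hμ hc htail_le).trans htail
  have hAv : l1norm (A *ᵥ v) ≤ (1 + δub) * Z :=
    (l1norm_mulVec_restr_le A hr hδub hub h _ hμ htail_le).trans
      (mul_le_mul_of_nonneg_left htail hδub)
  have hAu : A *ᵥ u = -(A *ᵥ v) :=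
    eq_neg_of_add_eq_zero_left (by rw [← Matrix.mulVec_add, huv, hAh])
  have hXZ : (1 - δlb) * X ≤ (1 + δub) * Z := by
    refine (hlb u (sparse_restr ((card_union_le S T).trans ?_) h)).trans ?_
    · omega
    · rwa [hAu, l1norm_neg]
  have hSX : ∑ i ∈ S, |h i| ≤ Real.sqrt s * X :=
    (sum_abs_le_sqrt_card_mul_l2norm_restr h S).trans <|
      mul_le_mul (Real.sqrt_le_sqrt (Nat.cast_le.mpr hS)) (l2norm_restr_mono h subset_union_left)
        (l2norm_nonneg _) (Real.sqrt_nonneg _)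
  have hh : l2norm h ≤ X + Z := huv ▸ (l2norm_add_le u v).trans (add_le_add_right hv X)
  have hZX : (Real.sqrt r - α) * Z ≤ (Real.sqrt s + α) * X := by
    have hmass : Real.sqrt r * Z = ∑ i ∈ Sᶜ, |h i| := mul_div_cancel₀ _ hc.ne'
    linarith [mul_le_mul_of_nonneg_left hh hα]
  obtain ⟨hX0, hZ0⟩ := eq_zero_of_mul_le_of_mul_le (l2norm_nonneg u)
    (div_nonneg (sum_nonneg fun i _ => abs_nonneg _) hc.le) (sub_pos.mpr hαr) hδub hXZ hZX hcond
  exact l2norm_eq_zero.mp (le_antisymm (by linarith) (l2norm_nonneg h))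

end RIP

lemma sum_abs_compl_le_of_objective_le {x y : Fin n → ℝ} {S : Finset (Fin n)} {α : ℝ}
    (hx : ∀ i ∉ S, x i = 0) (hα : 0 ≤ α)
    (hobj : l1norm y - α * l2norm y ≤ l1norm x - α * l2norm x) :
    ∑ i ∈ Sᶜ, |(y - x) i| ≤ ∑ i ∈ S, |(y - x) i| + α * l2norm (y - x) := by
  have hy1 : l1norm y = ∑ i ∈ S, |y i| + ∑ i ∈ Sᶜ, |(y - x) i| := by
    rw [l1norm, ← sum_add_sum_compl S]
    congr 1
    exact sum_congr rfl fun i hi => by rw [Pi.sub_apply, hx i (mem_compl.mp hi), sub_zero]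
  have hx1 : l1norm x ≤ ∑ i ∈ S, |y i| + ∑ i ∈ S, |(y - x) i| := by
    have hxc : ∑ i ∈ Sᶜ, |x i| = 0 :=
      sum_eq_zero fun i hi => by rw [hx i (mem_compl.mp hi), abs_zero]
    rw [l1norm, ← sum_add_sum_compl S, hxc, add_zero, ← sum_add_distrib]
    refine sum_le_sum fun i _ => ?_
    rw [Pi.sub_apply, abs_sub_comm]
    linarith [abs_sub_abs_le_abs_sub (x i) (y i)]
  have hy2 : l2norm y ≤ l2norm x + l2norm (y - x) := by
    simpa using l2norm_add_le x (y - x)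
  linarith [mul_le_mul_of_nonneg_left hy2 hα]

lemma rip_condition_mono {a b δlb δub : ℝ} (hb : 0 ≤ b) (hba : b ≤ a) (hδub : 0 ≤ δub)
    (h : δub + b * δlb < b - 1) : δub + a * δlb < a - 1 := by
  have hδlb : 0 < 1 - δlb := pos_of_mul_pos_right (by linarith : 0 < b * (1 - δlb)) hb
  linarith [mul_le_mul_of_nonneg_right hba hδlb.le]

lemma sqrt_div_two_le_sqrt_mul_sub_div_add {k t α : ℝ} (hα : 0 ≤ α) (hαt : α < t)
    (hk : 4 * α ^ 2 / (t - α) ^ 2 ≤ k) :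
    Real.sqrt k / 2 ≤ (Real.sqrt k * t - α) / (t + α) := by
  have hgap : 0 < t - α := sub_pos.mpr hαt
  have h2α : 2 * α / (t - α) ≤ Real.sqrt k :=
    (Real.le_sqrt (by positivity) ((by positivity : (0 : ℝ) ≤ _).trans hk)).mpr
      (by rwa [div_pow, mul_pow, show (2 : ℝ) ^ 2 = 4 by norm_num])
  rw [div_le_iff₀ hgap] at h2α
  rw [le_div_iff₀ (by linarith)]
  linarith

end

theorem stmt6_general {n m : ℕ} (α : ℝ) (hα0 : 0 < α)
    (s : ℕ) (hαs : α < Real.sqrt s)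
    (k : ℝ) (hk : 4 * α ^ 2 / (Real.sqrt s - α) ^ 2 ≤ k)
    (ks : ℕ) (hksk : (ks : ℝ) = k * s)
    (a : ℝ) (ha_def : a = (Real.sqrt (ks : ℝ) - α) / (Real.sqrt s + α))
    (A : Matrix (Fin m) (Fin n) ℝ) (δlb δub : ℝ) (hδlb : 0 ≤ δlb) (hδub : 0 ≤ δub)
    (hRIPlb : ∀ v : Fin n → ℝ, Sparse (ks + s) v →
      (1 - δlb) * l2norm v ≤ l1norm (A.mulVec v))
    (hRIPub : ∀ v : Fin n → ℝ, Sparse ks v →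
      l1norm (A.mulVec v) ≤ (1 + δub) * l2norm v)
    (hcond : δub + (Real.sqrt k / 2) * δlb < Real.sqrt k / 2 - 1) :
    Real.sqrt k / 2 ≤ a ∧ 1 < Real.sqrt k / 2 ∧
    δub + a * δlb < a - 1 ∧
    ∀ x : Fin n → ℝ, Sparse s x → ∀ b : Fin m → ℝ, b = A.mulVec x →
      ∀ xhat : Fin n → ℝ, A.mulVec xhat = b →
        l1norm xhat - α * l2norm xhat ≤ l1norm x - α * l2norm x → xhat = x := by
  have hk0 : 0 ≤ k := (by positivity : (0 : ℝ) ≤ _).trans hk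
  have hsqrt_ks : Real.sqrt ks = Real.sqrt k * Real.sqrt s := by rw [hksk, Real.sqrt_mul hk0]
  have hka : Real.sqrt k / 2 ≤ a := by
    rw [ha_def, hsqrt_ks]; exact sqrt_div_two_le_sqrt_mul_sub_div_add hα0.le hαs hk
  have hk1 : 1 < Real.sqrt k / 2 := by
    linarith [mul_nonneg (by positivity : (0 : ℝ) ≤ Real.sqrt k / 2) hδlb]
  have hrip := rip_condition_mono (by positivity) hka hδub hcond
  refine ⟨hka, hk1, hrip, ?_⟩
  rintro x ⟨S, hS, hx⟩ b rfl xhat hAx hobj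
  have hsα : 0 < Real.sqrt s + α := by positivity
  have ha_mul : a * (Real.sqrt s + α) = Real.sqrt ks - α := by rw [ha_def]; field_simp
  have hαks : α < Real.sqrt ks := by
    linarith [mul_lt_mul_of_pos_right (hk1.trans_le hka) hsα]
  have hcond' : (1 + δub) * (Real.sqrt s + α) < (Real.sqrt ks - α) * (1 - δlb) := by
    rw [← ha_mul]
    linarith [mul_lt_mul_of_pos_right (by linarith : 1 + δub < a * (1 - δlb)) hsα]
  have hker : A.mulVec (xhat - x) = 0 := by rw [Matrix.mulVec_sub, hAx, sub_self]
  exact sub_eq_zero.mp <| eq_zero_of_mulVec_eq_zero_of_cone A hα0.le hαks (by linarith) hRIPlb hRIPub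
    hcond' hker hS (sum_abs_compl_le_of_objective_le hx hα0.le hobj)

/-- Remark: simpler sufficient condition.  Let `0 < α ≤ 1`, `s` a positive
integer with `√s > α`, and `k ≥ 4α²/(√s − α)²` such that `ks ∈ ℤ₊`.  Then
`a(s,ks;α) = (√(ks) − α)/(√s + α) ≥ √k/2 > 1`; moreover, if the (ℓ₂,ℓ₁)-RIP constants of `A`
satisfy `δ_{ks}^{ub} + (√k/2)·δ_{(k+1)s}^{lb} < √k/2 − 1` then
`δ_{ks}^{ub} + a(s,ks;α)·δ_{(k+1)s}^{lb} < a(s,ks;α) − 1`, and consequently any `s`-sparse `x`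
with `b = Ax` is the unique minimizer of `‖·‖₁ − α‖·‖₂` subject to `Az = b`. -/
theorem stmt6 {n m : ℕ} (α : ℝ) (hα0 : 0 < α) (hα1 : α ≤ 1)
    (s : ℕ) (hs : 0 < s) (hαs : α < Real.sqrt s)
    (k : ℝ) (hk : 4 * α ^ 2 / (Real.sqrt s - α) ^ 2 ≤ k)
    (ks : ℕ) (hks : 0 < ks) (hksk : (ks : ℝ) = k * s)
    (a : ℝ) (ha_def : a = (Real.sqrt (ks : ℝ) - α) / (Real.sqrt s + α))
    (A : Matrix (Fin m) (Fin n) ℝ) (δlb δub : ℝ) (hδlb : 0 ≤ δlb) (hδub : 0 ≤ δub)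
    (hRIPlb : ∀ v : Fin n → ℝ, Sparse (ks + s) v →
      (1 - δlb) * l2norm v ≤ l1norm (A.mulVec v))
    (hRIPub : ∀ v : Fin n → ℝ, Sparse ks v →
      l1norm (A.mulVec v) ≤ (1 + δub) * l2norm v)
    (hcond : δub + (Real.sqrt k / 2) * δlb < Real.sqrt k / 2 - 1) :
    Real.sqrt k / 2 ≤ a ∧ 1 < Real.sqrt k / 2 ∧
    δub + a * δlb < a - 1 ∧
    ∀ x : Fin n → ℝ, Sparse s x → ∀ b : Fin m → ℝ, b = A.mulVec x →
      ∀ xhat : Fin n → ℝ, A.mulVec xhat = b →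
        l1norm xhat - α * l2norm xhat ≤ l1norm x - α * l2norm x → xhat = x :=
  stmt6_general α hα0 s hαs k hk ks hksk a ha_def A δlb δub hδlb hδub hRIPlb hRIPub hcond
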